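/- arXiv:1309.5009 — 3 statements merged into one kernel-verified Lean document; each statement's English description precedes it below -/
import Mathlib

section
/- Let n, d ∈ ℕ and let s, s', t : Fin n → Bool be binary strings of length n. Let P be a finite set of positions with |P| = d + 1 such that s i ≠ s' i for every i ∈ P. If the Hamming distance between t and s' is at most d, then there exists a position i ∈ P with t i ≠ s i. (This is the correctness lemma of the bounded search tree for Closest-String: if a candidate string s has distance greater than d to some input string s_i, then every solution must differ from s on at least one of any d + 1 chosen positions where s and s_i disagree.) -/
/-- Bounded-search-tree correctness for Closest-String: if `P` is a set of `d + 1` positions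
where `s` and `s'` disagree, then any string `t` within Hamming distance `d` of `s'` must
differ from `s` on some position in `P`. -/
theorem stmt_6 {n : ℕ} (d : ℕ) (s s' t : Fin n → Bool) (P : Finset (Fin n))
    (hP : P.card = d + 1) (hdiff : ∀ i ∈ P, s i ≠ s' i)
    (ht : hammingDist t s' ≤ d) :
    ∃ i ∈ P, t i ≠ s i := by
  by_contra h
  push_neg at h
  have hsub : P ⊆ Finset.univ.filter fun i => t i ≠ s' i := by
    intro i hi
    simp only [Finset.mem_filter, Finset.mem_univ, true_and]
    rw [h i hi]
    exact hdiff i hi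
  have : P.card ≤ hammingDist t s' := by
    rw [hammingDist]
    exact Finset.card_le_card hsub
  omega
end

section
/- Let φ be a CNF formula over a variable type V and let θ : V → Bool be a subset-minimal satisfying assignment of φ, i.e., θ satisfies φ and no assignment θ'' with {x : θ'' x = true} ⊊ {x : θ x = true} satisfies φ; assume the set {x : θ x = true} is finite of cardinality m. Then there is a sequence of assignments θ₀, θ₁, …, θ_m with θ₀ the all-false assignment and θ_m = θ, such that for each i < m the assignment θ_{i+1} agrees with θ_i except for setting exactly one additional variable x to true, where x occurs as the positive literal (x, true) in some clause of φ that is not satisfied by θ_i. (This establishes that the branching algorithm which flips variables of unsatisfied clauses to true generates every minimal satisfying assignment, the key to Min-MinOnes-SAT(Γ) ∈ Total-FPT.) -/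
/-!
If `f < θ` pointwise, minimality of `θ` makes `f` falsify some clause `C`. The literal through
which `θ` satisfies `C` cannot be negative, since `f ≤ θ` would then satisfy it as well; so it is
a positive literal `(x, true)` with `f x = false` and `θ x = true`. Flipping `x` keeps the new
assignment below `θ` and removes one variable from the gap `{x | θ x ∧ ¬ f x}`, so induction on
the size of the gap, starting from the all-false assignment, yields the chain.
-/

namespace CNF

variable {V : Type*}

def SatisfiesClause (θ : V → Bool) (C : Finset (V × Bool)) : Prop :=
  ∃ l ∈ C, θ l.1 = l.2

def Satisfies (θ : V → Bool) (φ : Finset (Finset (V × Bool))) : Prop :=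
  ∀ C ∈ φ, SatisfiesClause θ C

def IsFlipStep [DecidableEq V] (φ : Finset (Finset (V × Bool))) (f g : V → Bool) : Prop :=
  ∃ x, f x = false ∧ g = Function.update f x true ∧
    ∃ C ∈ φ, ¬ SatisfiesClause f C ∧ (x, true) ∈ C

theorem SatisfiesClause.exists_pos_lit_of_le {f θ : V → Bool} {C : Finset (V × Bool)}
    (hθ : SatisfiesClause θ C) (hle : f ≤ θ) (hf : ¬ SatisfiesClause f C) :
    ∃ x, (x, true) ∈ C ∧ f x = false ∧ θ x = true := by
  obtain ⟨⟨x, b⟩, hl, hθx⟩ := hθ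
  have hfx : f x ≠ b := fun h => hf ⟨(x, b), hl, h⟩
  cases b with
  | false =>
    have hfx : f x = true := by simpa using hfx
    simp [hle x hfx] at hθx
  | true => exact ⟨x, hl, by simpa using hfx, hθx⟩

theorem exists_unsat_clause_pos_lit_of_lt {φ : Finset (Finset (V × Bool))} {f θ : V → Bool}
    (hsat : Satisfies θ φ) (hmin : ∀ g < θ, ¬ Satisfies g φ) (hlt : f < θ) :
    ∃ x, f x = false ∧ θ x = true ∧ ∃ C ∈ φ, ¬ SatisfiesClause f C ∧ (x, true) ∈ C := by
  obtain ⟨C, hC, hfC⟩ : ∃ C ∈ φ, ¬ SatisfiesClause f C := by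
    simpa [Satisfies] using hmin f hlt
  obtain ⟨x, hx, hfx, hθx⟩ := (hsat C hC).exists_pos_lit_of_le hlt.le hfC
  exact ⟨x, hfx, hθx, C, hC, hfC, hx⟩

theorem exists_flipStep_chain [DecidableEq V] {φ : Finset (Finset (V × Bool))} {θ : V → Bool}
    (hsat : Satisfies θ φ) (hmin : ∀ g < θ, ¬ Satisfies g φ) (n : ℕ) :
    ∀ f ≤ θ, {x | θ x = true ∧ f x = false}.encard = n →
      ∃ seq : ℕ → V → Bool,
        seq 0 = f ∧ seq n = θ ∧ ∀ i < n, IsFlipStep φ (seq i) (seq (i + 1)) := by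
  induction n with
  | zero =>
    intro f hle hgap
    have hf : f = θ := by
      refine le_antisymm hle fun x hθx => ?_
      by_contra hfx
      exact Set.eq_empty_iff_forall_notMem.1 (Set.encard_eq_zero.1 hgap) x
        ⟨hθx, by simpa using hfx⟩
    exact ⟨fun _ => θ, hf.symm, rfl, by simp⟩
  | succ n ih =>
    intro f hle hgap
    obtain ⟨y, hθy, hfy⟩ : {x | θ x = true ∧ f x = false}.Nonempty :=
      Set.nonempty_of_encard_ne_zero (by simp [hgap])
    have hlt : f < θ := lt_of_le_of_ne hle (Function.ne_iff.2 ⟨y, by simp [hθy, hfy]⟩)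
    obtain ⟨x, hfx, hθx, hC⟩ := exists_unsat_clause_pos_lit_of_lt hsat hmin hlt
    set f' := Function.update f x true
    have hle' : f' ≤ θ := update_le_iff.2 ⟨hθx ▸ le_rfl, fun j _ => hle j⟩
    have hgap' : {y | θ y = true ∧ f' y = false}.encard = n := by
      have hx : x ∈ {y | θ y = true ∧ f y = false} := ⟨hθx, hfx⟩
      have hdiff : {y | θ y = true ∧ f' y = false} = {y | θ y = true ∧ f y = false} \ {x} := by
        ext y
        by_cases hyx : y = x <;> simp [f', hyx]
      rw [hdiff, Set.encard_sdiff_singleton_of_mem hx, hgap]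
      norm_cast
    obtain ⟨seq, h0, hn, hsteps⟩ := ih f' hle' hgap'
    refine ⟨fun | 0 => f | i + 1 => seq i, rfl, hn, ?_⟩
    rintro (_ | i) hi
    · exact ⟨x, hfx, h0, hC⟩
    · exact hsteps i (by omega)

end CNF

open CNF in
/-- Every subset-minimal satisfying assignment `θ` of a CNF `φ`, whose set of true variables
is finite of cardinality `m`, is reached from the all-false assignment by `m` steps, each
setting to true one additional variable that occurs positively in a clause of `φ` not yet
satisfied. -/
theorem stmt_8 {V : Type*} [DecidableEq V] (φ : Finset (Finset (V × Bool))) (θ : V → Bool) (m : ℕ)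
    (hsat : ∀ C ∈ φ, ∃ l ∈ C, θ l.1 = l.2)
    (hmin : ∀ θ'' : V → Bool, {x : V | θ'' x = true} ⊂ {x : V | θ x = true} →
      ¬ ∀ C ∈ φ, ∃ l ∈ C, θ'' l.1 = l.2)
    (hfin : {x : V | θ x = true}.Finite) (hcard : hfin.toFinset.card = m) :
    ∃ seq : ℕ → (V → Bool), seq 0 = (fun _ => false) ∧ seq m = θ ∧
      ∀ i < m, ∃ x : V, seq i x = false ∧
        seq (i + 1) = Function.update (seq i) x true ∧
        ∃ C ∈ φ, (¬ ∃ l ∈ C, seq i l.1 = l.2) ∧ (x, true) ∈ C := by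
  have hgap : {x | θ x = true ∧ (fun _ => false) x = false}.encard = m := by
    simpa [← hcard] using hfin.encard_eq_coe_toFinset_card
  exact exists_flipStep_chain hsat (fun g hg => hmin g hg) m _ (fun _ => Bool.false_le _) hgap
end

section
/- Let 𝒦 be a set of clauses over a variable type V, and let C_𝒦 be the clause-defined class of CNF formulas {φ : every clause of φ belongs to 𝒦}. Let φ be a CNF formula all of whose clauses are non-tautological, and let W ⊆ V be a set of variables. Then the following are equivalent: (i) for every assignment θ : V → Bool, the formula θ_W(φ) belongs to C_𝒦, where θ_W(φ) is obtained from φ by removing every clause containing a literal (x, b) with x ∈ W and θ x = b, and deleting from the remaining clauses all literals over variables in W; (ii) for every clause C of φ, the clause C − W obtained from C by deleting all literals over variables in W belongs to 𝒦. (This is the paper's observation that, for clause-defined base classes, strong 𝒞-backdoors coincide with deletion 𝒞-backdoors: W is a strong C_𝒦-backdoor of φ iff φ − W ∈ C_𝒦.) -/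
/-- For a clause-defined class `C_𝒦` and a CNF `φ` with non-tautological clauses, a set of
variables `W` is a strong `C_𝒦`-backdoor (every restriction `θ_W(φ)` lies in `C_𝒦`) iff it is
a deletion backdoor (`φ − W ∈ C_𝒦`, i.e. every clause of `φ` with its `W`-literals deleted lies
in `𝒦`). -/
theorem stmt_9 {V : Type*} [DecidableEq V] (𝒦 : Set (Finset (V × Bool)))
    (φ : Finset (Finset (V × Bool)))
    (hnontaut : ∀ C ∈ φ, ∀ x : V, ¬ ((x, true) ∈ C ∧ (x, false) ∈ C))
    (W : Finset V) :
    (∀ θ : V → Bool,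
        ∀ C' ∈ (φ.filter (fun C => ¬ ∃ l ∈ C, l.1 ∈ W ∧ θ l.1 = l.2)).image
            (fun C => C.filter (fun l => l.1 ∉ W)),
          C' ∈ 𝒦) ↔
      (∀ C ∈ φ, C.filter (fun l => l.1 ∉ W) ∈ 𝒦) := by
  classical
  constructor
  · intro h C hC
    have := h (fun x => if (x, true) ∈ C then false else true)
    apply this
    apply Finset.mem_image_of_mem
    rw [Finset.mem_filter]
    refine ⟨hC, ?_⟩
    rintro ⟨⟨x, b⟩, hl, _, hθ⟩
    simp only at hθ
    by_cases ht : (x, true) ∈ C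
    · rw [if_pos ht] at hθ
      subst hθ
      exact hnontaut C hC x ⟨ht, hl⟩
    · rw [if_neg ht] at hθ
      subst hθ
      exact ht hl
  · intro h θ C' hC'
    obtain ⟨C, hC, rfl⟩ := Finset.mem_image.mp hC'
    exact h C (Finset.mem_filter.mp hC).1
end
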